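/- For every r ≥ 0, all î, ĵ, k̂ ∈ {3, …, n+2} and all b, c, f_1, …, f_r ∈ {1, …, n+4}, one has ∂_{k̂} R^î_{ĵ, b, c; f_1; …; f_r} = 0 identically on ℝ^{n+4} (the components of the iterated covariant derivatives of the curvature do not depend on the coordinates x^3, …, x^{n+2}). -/

import Mathlib

namespace HolPaper

open Matrix

/-- Points of `ℝ^{n+4}`, with coordinates indexed by `Fin (n+4)`.
The paper's index `1` is `p1`, `2` is `p2`, `î ∈ {3,…,n+2}` is `ehat i` for `i : Fin n`,
`n+3` is `q1` and `n+4` is `q2`. -/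
abbrev Pt (n : ℕ) := Fin (n + 4) → ℝ

def p1 (n : ℕ) : Fin (n + 4) := ⟨0, by omega⟩
def p2 (n : ℕ) : Fin (n + 4) := ⟨1, by omega⟩
def ehat {n : ℕ} (i : Fin n) : Fin (n + 4) := ⟨i.1 + 2, by have := i.isLt; omega⟩
def q1 (n : ℕ) : Fin (n + 4) := ⟨n + 2, by omega⟩
def q2 (n : ℕ) : Fin (n + 4) := ⟨n + 3, by omega⟩

noncomputable section

variable {n N : ℕ}

/-- `u^î(x) = Σ_ĵ Σ_α (A_α)_{î-2,ĵ-2} x^ĵ (x^{n+3})^α`. -/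
def u (A : Fin N → Matrix (Fin n) (Fin n) ℝ) (i : Fin n) (x : Pt n) : ℝ :=
  ∑ j : Fin n, ∑ α : Fin N, A α i j * x (ehat j) * x (q1 n) ^ (α.1 + 1)

/-- `F(x) = Σ_î (x^î)²`. -/
def Fq (n : ℕ) (x : Pt n) : ℝ := ∑ i : Fin n, x (ehat i) ^ 2

/-- The Gram matrix `G(x)` of the metric. -/
def Gmet (A : Fin N → Matrix (Fin n) (Fin n) ℝ) (x : Pt n) :
    Matrix (Fin (n + 4)) (Fin (n + 4)) ℝ := fun a b =>
  (if (a = p1 n ∧ b = q1 n) ∨ (a = q1 n ∧ b = p1 n) then (1 : ℝ) else 0)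
  + (if (a = p2 n ∧ b = q2 n) ∨ (a = q2 n ∧ b = p2 n) then (1 : ℝ) else 0)
  + (∑ i : Fin n, if a = ehat i ∧ b = ehat i then (1 : ℝ) else 0)
  + (∑ i : Fin n, if (a = ehat i ∧ b = q2 n) ∨ (a = q2 n ∧ b = ehat i) then u A i x else 0)
  + (if (a = q1 n ∧ b = q1 n) ∨ (a = q2 n ∧ b = q2 n) then Fq n x else 0)

/-- Partial derivative `∂_b f` of a function on `ℝ^{n+4}`. -/
def pd (b : Fin (n + 4)) (f : Pt n → ℝ) (x : Pt n) : ℝ :=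
  fderiv ℝ f x (Pi.single b 1)

/-- Christoffel symbols
`Γ^a_{bc} = ½ Σ_d G^{ad} (∂_b G_{dc} + ∂_c G_{bd} − ∂_d G_{bc})`. -/
def Γchr (A : Fin N → Matrix (Fin n) (Fin n) ℝ) (a b c : Fin (n + 4)) (x : Pt n) : ℝ :=
  (1 / 2) * ∑ d : Fin (n + 4), (Gmet A x)⁻¹ a d *
    (pd b (fun y => Gmet A y d c) x + pd c (fun y => Gmet A y b d) x
      - pd d (fun y => Gmet A y b c) x)

/-- Curvature components
`R^a_{b,c,d} = ∂_c Γ^a_{db} − ∂_d Γ^a_{cb} + Σ_e (Γ^a_{ce} Γ^e_{db} − Γ^a_{de} Γ^e_{cb})`. -/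
def Rcurv (A : Fin N → Matrix (Fin n) (Fin n) ℝ) (a b c d : Fin (n + 4)) (x : Pt n) : ℝ :=
  pd c (Γchr A a d b) x - pd d (Γchr A a c b) x
  + ∑ e : Fin (n + 4), (Γchr A a c e x * Γchr A e d b x - Γchr A a d e x * Γchr A e c b x)

/-- Auxiliary recursion for iterated covariant derivatives of the curvature; the list of
differentiation indices is stored in *reverse* order (most recent derivative first). -/
def covRAux (A : Fin N → Matrix (Fin n) (Fin n) ℝ) :
    Fin (n + 4) → Fin (n + 4) → Fin (n + 4) → Fin (n + 4) → List (Fin (n + 4)) → Pt n → ℝ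
  | a, b, c, d, [], x => Rcurv A a b c d x
  | a, b, c, d, f :: fs, x =>
      pd f (covRAux A a b c d fs) x
      + ∑ l : Fin (n + 4), Γchr A a f l x * covRAux A l b c d fs x
      - ∑ l : Fin (n + 4), Γchr A l f b x * covRAux A a l c d fs x
      - ∑ l : Fin (n + 4), Γchr A l f c x * covRAux A a b l d fs x
      - ∑ l : Fin (n + 4), Γchr A l f d x * covRAux A a b c l fs x
      - ∑ s : Fin fs.length, ∑ l : Fin (n + 4),
          Γchr A l f (fs.get s) x * covRAux A a b c d (fs.set s l) x
  termination_by a b c d fs => fs.length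
  decreasing_by all_goals simp [List.length_set]

/-- `covR A a b c d [f_1, …, f_r] x` is the component `R^a_{b,c,d;f_1;…;f_r}(x)` of the
`r`-th covariant derivative of the curvature tensor (indices in natural order). -/
def covR (A : Fin N → Matrix (Fin n) (Fin n) ℝ) (a b c d : Fin (n + 4))
    (fs : List (Fin (n + 4))) (x : Pt n) : ℝ :=
  covRAux A a b c d fs.reverse x



-- index utilities
variable {n N : ℕ}

theorem ehat_ne_p1 (i : Fin n) : ehat i ≠ p1 n := by
  simp [ehat, p1, Fin.ext_iff]
theorem ehat_ne_p2 (i : Fin n) : ehat i ≠ p2 n := by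
  simp [ehat, p2, Fin.ext_iff]
theorem ehat_ne_q1 (i : Fin n) : ehat i ≠ q1 n := by
  have := i.isLt; simp [ehat, q1, Fin.ext_iff]; omega
theorem ehat_ne_q2 (i : Fin n) : ehat i ≠ q2 n := by
  have := i.isLt; simp [ehat, q2, Fin.ext_iff]; omega
theorem p1_ne_p2 : p1 n ≠ p2 n := by simp [p1, p2, Fin.ext_iff]
theorem p1_ne_q1 : p1 n ≠ q1 n := by simp [p1, q1, Fin.ext_iff]
theorem p1_ne_q2 : p1 n ≠ q2 n := by simp [p1, q2, Fin.ext_iff]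
theorem p2_ne_q1 : p2 n ≠ q1 n := by simp [p2, q1, Fin.ext_iff]
theorem p2_ne_q2 : p2 n ≠ q2 n := by simp [p2, q2, Fin.ext_iff]
theorem q1_ne_q2 : q1 n ≠ q2 n := by simp [q1, q2, Fin.ext_iff]
theorem ehat_inj {i j : Fin n} : ehat i = ehat j ↔ i = j := by
  simp [ehat, Fin.ext_iff]

theorem index_cases (a : Fin (n+4)) :
    a = p1 n ∨ a = p2 n ∨ (∃ i : Fin n, a = ehat i) ∨ a = q1 n ∨ a = q2 n := by
  rcases a with ⟨v, hv⟩
  rcases Nat.lt_or_ge v 2 with h | h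
  · interval_cases v
    · exact Or.inl rfl
    · exact Or.inr (Or.inl rfl)
  · rcases Nat.lt_or_ge v (n+2) with h2 | h2
    · exact Or.inr (Or.inr (Or.inl ⟨⟨v-2, by omega⟩, by simp [ehat, Fin.ext_iff]; omega⟩))
    · right; right; right
      rcases Nat.lt_or_ge v (n+3) with h3 | h3
      · exact Or.inl (by simp [q1, Fin.ext_iff]; omega)
      · exact Or.inr (by simp [q2, Fin.ext_iff]; omega)

theorem sum_split (f : Fin (n+4) → ℝ) :
    ∑ c : Fin (n+4), f c
      = f (p1 n) + f (p2 n) + (∑ i : Fin n, f (ehat i)) + f (q1 n) + f (q2 n) := by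
  rw [Fin.sum_univ_succ, Fin.sum_univ_succ, Fin.sum_univ_castSucc, Fin.sum_univ_castSucc]
  have e1 : ∀ i : Fin n, (((i.castSucc).castSucc).succ).succ = ehat i := fun i => by
    simp [ehat, Fin.ext_iff]
  have e2 : ((((Fin.last n).castSucc).succ).succ : Fin (n+4)) = q1 n := by
    simp [q1, Fin.ext_iff]
  have e3 : (((Fin.last (n+1)).succ).succ : Fin (n+4)) = q2 n := by
    simp [q2, Fin.ext_iff]
  have e4 : ((0 : Fin (n+4))) = p1 n := by simp [p1, Fin.ext_iff]
  have e5 : (((0 : Fin (n+3))).succ : Fin (n+4)) = p2 n := by simp [p2, Fin.ext_iff]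
  rw [Finset.sum_congr rfl (fun i _ => congrArg f (e1 i)), e2, e3, e4, e5]
  ring
theorem p1_ne_ehat (i : Fin n) : p1 n ≠ ehat i := (ehat_ne_p1 i).symm
theorem p2_ne_ehat (i : Fin n) : p2 n ≠ ehat i := (ehat_ne_p2 i).symm
theorem q1_ne_ehat (i : Fin n) : q1 n ≠ ehat i := (ehat_ne_q1 i).symm
theorem q2_ne_ehat (i : Fin n) : q2 n ≠ ehat i := (ehat_ne_q2 i).symm
theorem p2_ne_p1 : p2 n ≠ p1 n := p1_ne_p2.symm
theorem q1_ne_p1 : q1 n ≠ p1 n := p1_ne_q1.symm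
theorem q2_ne_p1 : q2 n ≠ p1 n := p1_ne_q2.symm
theorem q1_ne_p2 : q1 n ≠ p2 n := p2_ne_q1.symm
theorem q2_ne_p2 : q2 n ≠ p2 n := p2_ne_q2.symm
theorem q2_ne_q1 : q2 n ≠ q1 n := q1_ne_q2.symm

variable {A : Fin N → Matrix (Fin n) (Fin n) ℝ}

theorem Gmet_row_p1 (x : Pt n) (c : Fin (n+4)) :
    Gmet A x (p1 n) c = if c = q1 n then 1 else 0 := by
  simp [Gmet, p1_ne_q1, p1_ne_q2, p1_ne_ehat, p1_ne_p2]

theorem Gmet_row_p2 (x : Pt n) (c : Fin (n+4)) :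
    Gmet A x (p2 n) c = if c = q2 n then 1 else 0 := by
  simp [Gmet, p2_ne_q1, p2_ne_q2, p2_ne_ehat, p2_ne_p1]

theorem Gmet_row_ehat (x : Pt n) (i : Fin n) (c : Fin (n+4)) :
    Gmet A x (ehat i) c
      = (if c = ehat i then 1 else 0) + (if c = q2 n then u A i x else 0) := by
  simp [Gmet, ehat_ne_p1, ehat_ne_p2, ehat_ne_q1, ehat_ne_q2, ehat_inj, ite_and]

theorem Gmet_row_q1 (x : Pt n) (c : Fin (n+4)) :
    Gmet A x (q1 n) c
      = (if c = p1 n then 1 else 0) + (if c = q1 n then Fq n x else 0) := by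
  simp [Gmet, q1_ne_p1, q1_ne_p2, q1_ne_ehat, q1_ne_q2]

theorem Gmet_row_q2 (x : Pt n) (c : Fin (n+4)) :
    Gmet A x (q2 n) c
      = (if c = p2 n then 1 else 0) + (∑ j : Fin n, if c = ehat j then u A j x else 0)
        + (if c = q2 n then Fq n x else 0) := by
  simp [Gmet, q2_ne_p1, q2_ne_p2, q2_ne_ehat, q2_ne_q1]

theorem Gmet_col_p1 (x : Pt n) (b : Fin (n+4)) :
    Gmet A x b (p1 n) = if b = q1 n then 1 else 0 := by
  rcases index_cases b with h | h | ⟨i, h⟩ | h | h <;> subst h <;>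
    simp [Gmet_row_p1, Gmet_row_p2, Gmet_row_ehat, Gmet_row_q1, Gmet_row_q2,
      p1_ne_q1, p1_ne_q2, p1_ne_ehat, p1_ne_p2, ehat_ne_q1, p2_ne_q1, q2_ne_q1]

theorem Gmet_col_p2 (x : Pt n) (b : Fin (n+4)) :
    Gmet A x b (p2 n) = if b = q2 n then 1 else 0 := by
  rcases index_cases b with h | h | ⟨i, h⟩ | h | h <;> subst h <;>
    simp [Gmet_row_p1, Gmet_row_p2, Gmet_row_ehat, Gmet_row_q1, Gmet_row_q2,
      p2_ne_q1, p2_ne_q2, p2_ne_ehat, p2_ne_p1, ehat_ne_q2, p1_ne_q2, q1_ne_q2]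

theorem Gmet_col_ehat (x : Pt n) (i : Fin n) (b : Fin (n+4)) :
    Gmet A x b (ehat i)
      = (if b = ehat i then 1 else 0) + (if b = q2 n then u A i x else 0) := by
  rcases index_cases b with h | h | ⟨j, h⟩ | h | h <;> subst h <;>
    simp [Gmet_row_p1, Gmet_row_p2, Gmet_row_ehat, Gmet_row_q1, Gmet_row_q2,
      ehat_ne_p1, ehat_ne_p2, ehat_ne_q1, ehat_ne_q2, ehat_inj, p1_ne_q1, p2_ne_q2,
      q1_ne_ehat, q2_ne_ehat, p1_ne_ehat, p2_ne_ehat, p1_ne_q2, q1_ne_q2, eq_comm (a := ehat i)]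
theorem fderiv_shift (f : Pt n → ℝ) (v x : Pt n) :
    fderiv ℝ (fun y => f (y + v)) x = fderiv ℝ f (x + v) := by
  by_cases h : DifferentiableAt ℝ f (x + v)
  · have := (h.hasFDerivAt.comp x ((hasFDerivAt_id x).add_const v))
    simpa [Function.comp_def] using this.fderiv
  · rw [fderiv_zero_of_not_differentiableAt h, fderiv_zero_of_not_differentiableAt]
    intro hc
    have h2 := DifferentiableAt.comp (x + v) (by simpa using hc :
        DifferentiableAt ℝ (fun y => f (y + v)) (x + v - v))
      ((differentiableAt_id).sub_const v)
    simp only [Function.comp_def, sub_add_cancel] at h2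
    exact h h2

theorem pd_const (b : Fin (n+4)) (c : ℝ) (x : Pt n) : pd b (fun _ => c) x = 0 := by
  simp [pd]

theorem pd_const_add (b : Fin (n+4)) (c : ℝ) (f : Pt n → ℝ) (x : Pt n) :
    pd b (fun y => c + f y) x = pd b f x := by
  simp [pd, fderiv_const_add]

theorem pd_shift (f : Pt n → ℝ) (v : Pt n) (b : Fin (n+4)) (x : Pt n) :
    pd b (fun y => f (y + v)) x = pd b f (x + v) := by
  simp [pd, fderiv_shift]

theorem pd_invariant (f : Pt n → ℝ) (v : Pt n) (h : ∀ y, f (y + v) = f y)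
    (b : Fin (n+4)) (x : Pt n) : pd b f (x + v) = pd b f x := by
  rw [← pd_shift]
  congr 1
  exact funext h

theorem pd_of_line (f : Pt n → ℝ) (b : Fin (n+4)) (x : Pt n) (φ : ℝ)
    (hd : DifferentiableAt ℝ f x)
    (h : ∀ t : ℝ, f (x + t • (Pi.single b 1 : Pt n)) = f x + t * φ) :
    pd b f x = φ := by
  have hc : HasDerivAt (fun t : ℝ => x + t • (Pi.single b 1 : Pt n))
      (Pi.single b 1 : Pt n) 0 := by
    simpa using ((hasDerivAt_id (0:ℝ)).smul_const (Pi.single b 1 : Pt n)).const_add x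
  have hd' : HasFDerivAt f (fderiv ℝ f x) (x + (0:ℝ) • (Pi.single b 1 : Pt n)) := by
    simpa using hd.hasFDerivAt
  have h1 : HasDerivAt (fun t : ℝ => f (x + t • (Pi.single b 1 : Pt n)))
      (fderiv ℝ f x (Pi.single b 1)) 0 := by
    have := hd'.comp_hasDerivAt 0 hc
    simpa [Function.comp_def] using this
  have h2 : HasDerivAt (fun t : ℝ => f x + t * φ) φ 0 := by
    simpa using ((hasDerivAt_id (0:ℝ)).mul_const φ).const_add (f x)
  have heq : (fun t : ℝ => f (x + t • (Pi.single b 1 : Pt n))) = fun t => f x + t * φ :=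
    funext fun t => h t
  rw [heq] at h1
  have := h1.unique h2
  simpa [pd] using this

theorem pd_eq_zero_of_invariant (f : Pt n → ℝ) (b : Fin (n+4))
    (h : ∀ (t : ℝ) (y : Pt n), f (y + t • (Pi.single b 1 : Pt n)) = f y) (x : Pt n) :
    pd b f x = 0 := by
  by_cases hd : DifferentiableAt ℝ f x
  · refine pd_of_line f b x 0 hd fun t => by rw [h t x]; ring
  · simp [pd, fderiv_zero_of_not_differentiableAt hd]

theorem pd_congr {f g : Pt n → ℝ} (h : ∀ y, f y = g y) (b : Fin (n+4)) (x : Pt n) :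
    pd b f x = pd b g x := by
  have : f = g := funext h
  rw [this]

theorem pd_zero_fun {f : Pt n → ℝ} (h : ∀ y, f y = 0) (b : Fin (n+4)) (x : Pt n) :
    pd b f x = 0 := by
  rw [pd_congr h]
  exact pd_const b 0 x
theorem shift_apply (x : Pt n) (t : ℝ) (b a : Fin (n+4)) :
    (x + t • (Pi.single b 1 : Pt n)) a = x a + t * (if a = b then 1 else 0) := by
  simp [Pi.single_apply]

theorem u_shift (i : Fin n) (x : Pt n) (t : ℝ) (b : Fin (n+4))
    (h1 : ∀ j : Fin n, b ≠ ehat j) (h2 : b ≠ q1 n) :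
    u A i (x + t • (Pi.single b 1 : Pt n)) = u A i x := by
  unfold u
  refine Finset.sum_congr rfl fun j _ => Finset.sum_congr rfl fun α _ => ?_
  rw [shift_apply, shift_apply]
  rw [if_neg fun h => h1 j h.symm, if_neg fun h => h2 h.symm]
  ring

theorem Fq_shift (x : Pt n) (t : ℝ) (b : Fin (n+4)) (h1 : ∀ j : Fin n, b ≠ ehat j) :
    Fq n (x + t • (Pi.single b 1 : Pt n)) = Fq n x := by
  unfold Fq
  refine Finset.sum_congr rfl fun j _ => ?_
  rw [shift_apply, if_neg fun h => h1 j h.symm]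
  ring

theorem u_shift_e (i k : Fin n) (x : Pt n) (t : ℝ) :
    u A i (x + t • (Pi.single (ehat k) 1 : Pt n))
      = u A i x + t * ∑ α : Fin N, A α i k * x (q1 n) ^ (α.1 + 1) := by
  unfold u
  rw [Finset.mul_sum]
  rw [show (∑ α : Fin N, t * (A α i k * x (q1 n) ^ (α.1+1)))
      = ∑ j : Fin n, if j = k then (∑ α : Fin N, t * (A α i k * x (q1 n) ^ (α.1+1))) else 0 by
    rw [Finset.sum_ite_eq' Finset.univ k
      (fun _ => ∑ α : Fin N, t * (A α i k * x (q1 n) ^ (α.1+1)))]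
    simp]
  rw [← Finset.sum_add_distrib]
  refine Finset.sum_congr rfl fun j _ => ?_
  by_cases hj : j = k
  · subst hj
    rw [if_pos rfl, ← Finset.sum_add_distrib]
    refine Finset.sum_congr rfl fun α _ => ?_
    rw [shift_apply, shift_apply, if_pos rfl, if_neg (q1_ne_ehat j)]
    ring
  · rw [if_neg hj]
    rw [show (0:ℝ) = ∑ α : Fin N, (0:ℝ) by simp, ← Finset.sum_add_distrib]
    refine Finset.sum_congr rfl fun α _ => ?_
    rw [shift_apply, shift_apply, if_neg (fun h => hj (ehat_inj.mp h)), if_neg (q1_ne_ehat k)]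
    ring

theorem u_differentiableAt (i : Fin n) (x : Pt n) : DifferentiableAt ℝ (u A i) x := by
  unfold u
  apply DifferentiableAt.fun_sum
  intro j _
  apply DifferentiableAt.fun_sum
  intro α _
  have hj : DifferentiableAt ℝ (fun y : Pt n => y (ehat j)) x :=
    (ContinuousLinearMap.proj (R := ℝ) (φ := fun _ : Fin (n+4) => ℝ) (ehat j)).differentiableAt
  have hq : DifferentiableAt ℝ (fun y : Pt n => y (q1 n)) x :=
    (ContinuousLinearMap.proj (R := ℝ) (φ := fun _ : Fin (n+4) => ℝ) (q1 n)).differentiableAt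
  exact (hj.const_mul _).mul (hq.pow _)

theorem pd_u_e (i k : Fin n) (x : Pt n) :
    pd (ehat k) (u A i) x = ∑ α : Fin N, A α i k * x (q1 n) ^ (α.1 + 1) :=
  pd_of_line _ _ _ _ (u_differentiableAt i x) (fun t => u_shift_e i k x t)
/-- Explicit inverse of the metric. -/
def Ginv (A : Fin N → Matrix (Fin n) (Fin n) ℝ) (x : Pt n) :
    Matrix (Fin (n + 4)) (Fin (n + 4)) ℝ := fun a b =>
  (if (a = p1 n ∧ b = q1 n) ∨ (a = q1 n ∧ b = p1 n) then (1:ℝ) else 0)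
  + (if (a = p2 n ∧ b = q2 n) ∨ (a = q2 n ∧ b = p2 n) then (1:ℝ) else 0)
  + (∑ i : Fin n, if a = ehat i ∧ b = ehat i then (1:ℝ) else 0)
  - (∑ i : Fin n, if (a = ehat i ∧ b = p2 n) ∨ (a = p2 n ∧ b = ehat i) then u A i x else 0)
  - (if a = p1 n ∧ b = p1 n then Fq n x else 0)
  + (if a = p2 n ∧ b = p2 n then (∑ i : Fin n, (u A i x)^2) - Fq n x else 0)

theorem Ginv_row_p1 (x : Pt n) (b : Fin (n+4)) :
    Ginv A x (p1 n) b = (if b = q1 n then 1 else 0) - (if b = p1 n then Fq n x else 0) := by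
  simp [Ginv, p1_ne_q1, p1_ne_q2, p1_ne_ehat, p1_ne_p2]

theorem Ginv_row_p2 (x : Pt n) (b : Fin (n+4)) :
    Ginv A x (p2 n) b = (if b = q2 n then 1 else 0)
      - (∑ i : Fin n, if b = ehat i then u A i x else 0)
      + (if b = p2 n then (∑ i : Fin n, (u A i x)^2) - Fq n x else 0) := by
  simp [Ginv, p2_ne_q1, p2_ne_q2, p2_ne_ehat, p2_ne_p1]

theorem Ginv_row_ehat (x : Pt n) (i : Fin n) (b : Fin (n+4)) :
    Ginv A x (ehat i) b
      = (if b = ehat i then 1 else 0) - (if b = p2 n then u A i x else 0) := by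
  simp [Ginv, ehat_ne_p1, ehat_ne_p2, ehat_ne_q1, ehat_ne_q2, ehat_inj, ite_and]

theorem Ginv_row_q1 (x : Pt n) (b : Fin (n+4)) :
    Ginv A x (q1 n) b = if b = p1 n then 1 else 0 := by
  simp [Ginv, q1_ne_p1, q1_ne_p2, q1_ne_ehat, q1_ne_q2]

theorem Ginv_row_q2 (x : Pt n) (b : Fin (n+4)) :
    Ginv A x (q2 n) b = if b = p2 n then 1 else 0 := by
  simp [Ginv, q2_ne_p1, q2_ne_p2, q2_ne_ehat, q2_ne_q1]

theorem Gmet_mul_Ginv (x : Pt n) : Gmet A x * Ginv A x = 1 := by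
  ext a b
  rw [Matrix.mul_apply, sum_split, Matrix.one_apply]
  rcases index_cases a with h | h | ⟨i, h⟩ | h | h <;> subst h <;>
    rcases index_cases b with h | h | ⟨m, h⟩ | h | h <;> subst h <;>
    simp [Gmet_row_p1, Gmet_row_p2, Gmet_row_ehat, Gmet_row_q1, Gmet_row_q2,
      Ginv_row_p1, Ginv_row_p2, Ginv_row_ehat, Ginv_row_q1, Ginv_row_q2,
      p1_ne_p2, p1_ne_q1, p1_ne_q2, p2_ne_p1, p2_ne_q1, p2_ne_q2,
      q1_ne_p1, q1_ne_p2, q1_ne_q2, q2_ne_p1, q2_ne_p2, q2_ne_q1,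
      ehat_ne_p1, ehat_ne_p2, ehat_ne_q1, ehat_ne_q2,
      p1_ne_ehat, p2_ne_ehat, q1_ne_ehat, q2_ne_ehat, ehat_inj,
      Finset.mul_sum, Finset.sum_sub_distrib, mul_ite, ite_mul, Fq, sq] <;>
    (try ring_nf) <;>
    (try simp [Finset.sum_ite_eq', mul_comm, eq_comm, pow_two]) <;>
    (try ring_nf) <;> (try abel)

theorem Ginv_eq (x : Pt n) : (Gmet A x)⁻¹ = Ginv A x :=
  Matrix.inv_eq_right_inv (Gmet_mul_Ginv x)
theorem Gmet_symm (x : Pt n) (a b : Fin (n+4)) : Gmet A x a b = Gmet A x b a := by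
  rcases index_cases a with h | h | ⟨i, h⟩ | h | h <;> subst h <;>
    rcases index_cases b with h | h | ⟨m, h⟩ | h | h <;> subst h <;>
    simp [Gmet_row_p1, Gmet_row_p2, Gmet_row_ehat, Gmet_row_q1, Gmet_row_q2,
      p1_ne_p2, p1_ne_q1, p1_ne_q2, p2_ne_p1, p2_ne_q1, p2_ne_q2,
      q1_ne_p1, q1_ne_p2, q1_ne_q2, q2_ne_p1, q2_ne_p2, q2_ne_q1,
      ehat_ne_p1, ehat_ne_p2, ehat_ne_q1, ehat_ne_q2,
      p1_ne_ehat, p2_ne_ehat, q1_ne_ehat, q2_ne_ehat, ehat_inj, eq_comm,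
      Finset.sum_ite_eq']

theorem Gmet_shift_P {b : Fin (n+4)} (hb : b = p1 n ∨ b = p2 n) (x : Pt n) (t : ℝ) :
    Gmet A (x + t • (Pi.single b 1 : Pt n)) = Gmet A x := by
  have h1 : ∀ j : Fin n, b ≠ ehat j := by
    rcases hb with h | h <;> subst h <;> intro j <;>
      [exact p1_ne_ehat j; exact p2_ne_ehat j]
  have h2 : b ≠ q1 n := by
    rcases hb with h | h <;> subst h <;> [exact p1_ne_q1; exact p2_ne_q1]
  funext a c
  unfold Gmet
  rw [Fq_shift x t b h1]
  congr 1
  congr 1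
  refine Finset.sum_congr rfl fun i _ => ?_
  rw [u_shift i x t b h1 h2]

theorem pd_p_Gentry {b : Fin (n+4)} (hb : b = p1 n ∨ b = p2 n) (d c : Fin (n+4)) (x : Pt n) :
    pd b (fun y => Gmet A y d c) x = 0 :=
  pd_eq_zero_of_invariant _ _
    (fun t y => congrFun (congrFun (Gmet_shift_P hb y t) d) c) x

theorem Γchr_shift_P {b : Fin (n+4)} (hb : b = p1 n ∨ b = p2 n) (a e c : Fin (n+4))
    (x : Pt n) (t : ℝ) :
    Γchr A a e c (x + t • (Pi.single b 1 : Pt n)) = Γchr A a e c x := by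
  have key : ∀ (b' d' c' : Fin (n+4)),
      pd b' (fun y => Gmet A y d' c') (x + t • (Pi.single b 1 : Pt n))
        = pd b' (fun y => Gmet A y d' c') x := fun b' d' c' =>
    pd_invariant _ _ (fun y => congrFun (congrFun (Gmet_shift_P hb y t) d') c') b' x
  unfold Γchr
  rw [Gmet_shift_P hb]
  congr 1
  refine Finset.sum_congr rfl fun d _ => ?_
  rw [key, key, key]

theorem Γchr_symm (a b c : Fin (n+4)) (x : Pt n) : Γchr A a b c x = Γchr A a c b x := by
  unfold Γchr
  congr 1
  refine Finset.sum_congr rfl fun d _ => ?_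
  have e1 : pd b (fun y => Gmet A y d c) x = pd b (fun y => Gmet A y c d) x :=
    pd_congr (fun y => Gmet_symm y d c) b x
  have e2 : pd c (fun y => Gmet A y b d) x = pd c (fun y => Gmet A y d b) x :=
    pd_congr (fun y => Gmet_symm y b d) c x
  have e3 : pd d (fun y => Gmet A y b c) x = pd d (fun y => Gmet A y c b) x :=
    pd_congr (fun y => Gmet_symm y b c) d x
  rw [e1, e2, e3]
  ring

theorem Γchr_Q_zero {a : Fin (n+4)} (ha : a = q1 n ∨ a = q2 n) (b c : Fin (n+4)) (x : Pt n) :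
    Γchr A a b c x = 0 := by
  unfold Γchr
  rw [Ginv_eq]
  have hz : ∀ p : Fin (n+4), (p = p1 n ∨ p = p2 n) →
      pd b (fun y => Gmet A y p c) x + pd c (fun y => Gmet A y b p) x
        - pd p (fun y => Gmet A y b c) x = 0 := by
    intro p hp
    have e1 : pd b (fun y => Gmet A y p c) x = 0 := by
      rcases hp with h | h <;> subst h
      · rw [pd_congr (fun y => Gmet_row_p1 y c), pd_const]
      · rw [pd_congr (fun y => Gmet_row_p2 y c), pd_const]
    have e2 : pd c (fun y => Gmet A y b p) x = 0 := by
      rcases hp with h | h <;> subst h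
      · rw [pd_congr (fun y => Gmet_col_p1 y b), pd_const]
      · rw [pd_congr (fun y => Gmet_col_p2 y b), pd_const]
    have e3 : pd p (fun y => Gmet A y b c) x = 0 := pd_p_Gentry hp b c x
    rw [e1, e2, e3]; ring
  rcases ha with h | h <;> subst h
  · have : ∀ d : Fin (n+4), Ginv A x (q1 n) d *
        (pd b (fun y => Gmet A y d c) x + pd c (fun y => Gmet A y b d) x
          - pd d (fun y => Gmet A y b c) x)
        = if d = p1 n then (pd b (fun y => Gmet A y d c) x + pd c (fun y => Gmet A y b d) x
          - pd d (fun y => Gmet A y b c) x) else 0 := by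
      intro d; rw [Ginv_row_q1, ite_mul, one_mul, zero_mul]
    rw [Finset.sum_congr rfl (fun d _ => this d), Finset.sum_ite_eq' Finset.univ (p1 n)]
    simp [hz (p1 n) (Or.inl rfl)]
  · have : ∀ d : Fin (n+4), Ginv A x (q2 n) d *
        (pd b (fun y => Gmet A y d c) x + pd c (fun y => Gmet A y b d) x
          - pd d (fun y => Gmet A y b c) x)
        = if d = p2 n then (pd b (fun y => Gmet A y d c) x + pd c (fun y => Gmet A y b d) x
          - pd d (fun y => Gmet A y b c) x) else 0 := by
      intro d; rw [Ginv_row_q2, ite_mul, one_mul, zero_mul]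
    rw [Finset.sum_congr rfl (fun d _ => this d), Finset.sum_ite_eq' Finset.univ (p2 n)]
    simp [hz (p2 n) (Or.inr rfl)]

theorem Γchr_P_left_zero {b : Fin (n+4)} (hb : b = p1 n ∨ b = p2 n) (a c : Fin (n+4))
    (x : Pt n) : Γchr A a b c x = 0 := by
  unfold Γchr
  rw [show (∑ d : Fin (n+4), (Gmet A x)⁻¹ a d *
      (pd b (fun y => Gmet A y d c) x + pd c (fun y => Gmet A y b d) x
        - pd d (fun y => Gmet A y b c) x)) = 0 from
    Finset.sum_eq_zero fun d _ => ?_]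
  · ring
  have e1 : pd b (fun y => Gmet A y d c) x = 0 := pd_p_Gentry hb d c x
  have e2 : pd c (fun y => Gmet A y b d) x = 0 := by
    rcases hb with h | h <;> subst h
    · rw [pd_congr (fun y => Gmet_row_p1 y d), pd_const]
    · rw [pd_congr (fun y => Gmet_row_p2 y d), pd_const]
  have e3 : pd d (fun y => Gmet A y b c) x = 0 := by
    rcases hb with h | h <;> subst h
    · rw [pd_congr (fun y => Gmet_row_p1 y c), pd_const]
    · rw [pd_congr (fun y => Gmet_row_p2 y c), pd_const]
  rw [e1, e2, e3]; ring

theorem Γchr_P_zero {a b c : Fin (n+4)}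
    (h : b = p1 n ∨ b = p2 n ∨ c = p1 n ∨ c = p2 n) (x : Pt n) : Γchr A a b c x = 0 := by
  rcases h with h | h | h | h
  · exact Γchr_P_left_zero (Or.inl h) a c x
  · exact Γchr_P_left_zero (Or.inr h) a c x
  · rw [Γchr_symm]; exact Γchr_P_left_zero (Or.inl h) a b x
  · rw [Γchr_symm]; exact Γchr_P_left_zero (Or.inr h) a b x
theorem skewA (hA : ∀ α, (A α)ᵀ = -A α) (α : Fin N) (i j : Fin n) : A α i j = -A α j i := by
  have := congrFun (congrFun (hA α) j) i
  simpa [Matrix.transpose_apply] using this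

/-- `pd` of the entry `G_{d, ehat γ}` in an `ehat β` direction. -/
theorem pd_e_G_col_ehat (d : Fin (n+4)) (γ β : Fin n) (x : Pt n) :
    pd (ehat β) (fun y => Gmet A y d (ehat γ)) x
      = if d = q2 n then ∑ α : Fin N, A α γ β * x (q1 n) ^ (α.1 + 1) else 0 := by
  by_cases hd : d = q2 n
  · subst hd
    rw [pd_congr (fun y => by
      rw [Gmet_col_ehat y γ (q2 n), if_neg (q2_ne_ehat γ), if_pos rfl, zero_add])]
    rw [pd_u_e, if_pos rfl]
  · rw [if_neg hd]
    rw [pd_congr (fun y => by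
      rw [Gmet_col_ehat y γ d, if_neg hd]), pd_congr (fun y => add_zero _), pd_const]

theorem pd_e_G_row_ehat (d : Fin (n+4)) (β γ : Fin n) (x : Pt n) :
    pd (ehat γ) (fun y => Gmet A y (ehat β) d) x
      = if d = q2 n then ∑ α : Fin N, A α β γ * x (q1 n) ^ (α.1 + 1) else 0 := by
  rw [pd_congr (fun y => Gmet_symm y (ehat β) d)]
  exact pd_e_G_col_ehat d β γ x

theorem Γchr_EE_zero (hA : ∀ α, (A α)ᵀ = -A α) (a : Fin (n+4)) (β γ : Fin n) (x : Pt n) :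
    Γchr A a (ehat β) (ehat γ) x = 0 := by
  unfold Γchr
  rw [show (∑ d : Fin (n+4), (Gmet A x)⁻¹ a d *
      (pd (ehat β) (fun y => Gmet A y d (ehat γ)) x
        + pd (ehat γ) (fun y => Gmet A y (ehat β) d) x
        - pd d (fun y => Gmet A y (ehat β) (ehat γ)) x)) = 0 from
    Finset.sum_eq_zero fun d _ => ?_]
  · ring
  have e3 : pd d (fun y => Gmet A y (ehat β) (ehat γ)) x = 0 := by
    rw [pd_congr (fun y => by
      rw [Gmet_row_ehat y β (ehat γ), if_neg (ehat_ne_q2 γ), add_zero]), pd_const]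
  rw [pd_e_G_col_ehat, pd_e_G_row_ehat, e3]
  by_cases hd : d = q2 n
  · rw [if_pos hd, if_pos hd, ← Finset.sum_add_distrib]
    rw [Finset.sum_eq_zero fun α _ => by rw [skewA hA α γ β]; ring]
    ring
  · rw [if_neg hd, if_neg hd]; ring

theorem Γchr_E_E_eval (hA : ∀ α, (A α)ᵀ = -A α) (i : Fin n) (b : Fin (n+4)) (γ : Fin n) (x : Pt n) :
    Γchr A (ehat i) b (ehat γ) x
      = if b = q2 n then ∑ α : Fin N, A α i γ * x (q1 n) ^ (α.1 + 1) else 0 := by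
  unfold Γchr
  rw [Ginv_eq]
  have expand : ∀ d : Fin (n+4), Ginv A x (ehat i) d *
      (pd b (fun y => Gmet A y d (ehat γ)) x + pd (ehat γ) (fun y => Gmet A y b d) x
        - pd d (fun y => Gmet A y b (ehat γ)) x)
      = (if d = ehat i then
          (pd b (fun y => Gmet A y d (ehat γ)) x + pd (ehat γ) (fun y => Gmet A y b d) x
            - pd d (fun y => Gmet A y b (ehat γ)) x) else 0)
        - (if d = p2 n then u A i x *
          (pd b (fun y => Gmet A y d (ehat γ)) x + pd (ehat γ) (fun y => Gmet A y b d) x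
            - pd d (fun y => Gmet A y b (ehat γ)) x) else 0) := by
    intro d
    rw [Ginv_row_ehat]
    split_ifs <;> ring
  rw [Finset.sum_congr rfl fun d _ => expand d, Finset.sum_sub_distrib,
    Finset.sum_ite_eq' Finset.univ (ehat i), Finset.sum_ite_eq' Finset.univ (p2 n)]
  simp only [Finset.mem_univ, ite_true]
  -- the `p2` combination vanishes
  have hp2 : pd b (fun y => Gmet A y (p2 n) (ehat γ)) x
      + pd (ehat γ) (fun y => Gmet A y b (p2 n)) x
      - pd (p2 n) (fun y => Gmet A y b (ehat γ)) x = 0 := by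
    have e1 : pd b (fun y => Gmet A y (p2 n) (ehat γ)) x = 0 := by
      rw [pd_congr (fun y => Gmet_row_p2 y (ehat γ)), pd_const]
    have e2 : pd (ehat γ) (fun y => Gmet A y b (p2 n)) x = 0 := by
      rw [pd_congr (fun y => Gmet_col_p2 y b), pd_const]
    have e3 : pd (p2 n) (fun y => Gmet A y b (ehat γ)) x = 0 :=
      pd_p_Gentry (Or.inr rfl) b (ehat γ) x
    rw [e1, e2, e3]; ring
  rw [hp2]
  have e1 : pd b (fun y => Gmet A y (ehat i) (ehat γ)) x = 0 := by
    rw [pd_congr (fun y => by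
      rw [Gmet_row_ehat y i (ehat γ), if_neg (ehat_ne_q2 γ), add_zero]), pd_const]
  rw [e1]
  by_cases hb : b = q2 n
  · subst hb
    have e2 : pd (ehat γ) (fun y => Gmet A y (q2 n) (ehat i)) x
        = ∑ α : Fin N, A α i γ * x (q1 n) ^ (α.1 + 1) := by
      rw [pd_congr (fun y => Gmet_symm y (q2 n) (ehat i)), pd_e_G_row_ehat]
      rw [if_pos rfl]
    have e3 : pd (ehat i) (fun y => Gmet A y (q2 n) (ehat γ)) x
        = ∑ α : Fin N, A α γ i * x (q1 n) ^ (α.1 + 1) := by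
      rw [pd_e_G_col_ehat, if_pos rfl]
    rw [e2, e3, if_pos rfl]
    simp only [zero_add, mul_zero, sub_zero]
    rw [← Finset.sum_sub_distrib]
    rw [Finset.sum_congr rfl (fun α _ => show
        A α i γ * x (q1 n) ^ (α.1 + 1) - A α γ i * x (q1 n) ^ (α.1 + 1)
          = 2 * (A α i γ * x (q1 n) ^ (α.1 + 1)) by rw [skewA hA α γ i]; ring)]
    rw [Finset.mul_sum]
    refine Finset.sum_congr rfl fun α _ => by ring
  · rw [if_neg hb]
    have e2 : pd (ehat γ) (fun y => Gmet A y b (ehat i)) x = 0 := by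
      rw [pd_congr (fun y => Gmet_col_ehat y i b)]
      rw [pd_congr (fun y => by rw [if_neg hb, add_zero] :
        ∀ y, ((if b = ehat i then (1:ℝ) else 0) + (if b = q2 n then u A i y else 0))
          = (if b = ehat i then (1:ℝ) else 0))]
      exact pd_const _ _ x
    have e3 : pd (ehat i) (fun y => Gmet A y b (ehat γ)) x = 0 := by
      rw [pd_congr (fun y => Gmet_col_ehat y γ b)]
      rw [pd_congr (fun y => by rw [if_neg hb, add_zero] :
        ∀ y, ((if b = ehat γ then (1:ℝ) else 0) + (if b = q2 n then u A γ y else 0))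
          = (if b = ehat γ then (1:ℝ) else 0))]
      exact pd_const _ _ x
    rw [e2, e3]; ring

theorem Γchr_E_E_shift_e (hA : ∀ α, (A α)ᵀ = -A α) (i : Fin n) (b : Fin (n+4)) (γ k : Fin n) (x : Pt n) (t : ℝ) :
    Γchr A (ehat i) b (ehat γ) (x + t • (Pi.single (ehat k) 1 : Pt n))
      = Γchr A (ehat i) b (ehat γ) x := by
  rw [Γchr_E_E_eval hA, Γchr_E_E_eval hA]
  by_cases hb : b = q2 n
  · rw [if_pos hb, if_pos hb]
    refine Finset.sum_congr rfl fun α _ => ?_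
    rw [shift_apply, if_neg (q1_ne_ehat k)]
    ring_nf
  · rw [if_neg hb, if_neg hb]
theorem Rcurv_Q_zero {a : Fin (n+4)} (ha : a = q1 n ∨ a = q2 n) (b c d : Fin (n+4))
    (x : Pt n) : Rcurv A a b c d x = 0 := by
  unfold Rcurv
  rw [pd_zero_fun (fun y => Γchr_Q_zero ha d b y), pd_zero_fun (fun y => Γchr_Q_zero ha c b y),
    Finset.sum_eq_zero fun e _ => by
      rw [Γchr_Q_zero ha c e, Γchr_Q_zero ha d e]; ring]
  ring

theorem Rcurv_P_zero {b : Fin (n+4)} (hb : b = p1 n ∨ b = p2 n) (a c d : Fin (n+4))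
    (x : Pt n) : Rcurv A a b c d x = 0 := by
  unfold Rcurv
  have hb' : ∀ (a' b' : Fin (n+4)) (y : Pt n), Γchr A a' b' b y = 0 := fun a' b' y =>
    Γchr_P_zero (by rcases hb with h | h; exacts [Or.inr (Or.inr (Or.inl h)), Or.inr (Or.inr (Or.inr h))]) y
  rw [pd_zero_fun (fun y => hb' a d y), pd_zero_fun (fun y => hb' a c y),
    Finset.sum_eq_zero fun e _ => by rw [hb' e d, hb' e c]; ring]
  ring

theorem Rcurv_EE_c_zero (hA : ∀ α, (A α)ᵀ = -A α) (i j : Fin n) {c : Fin (n+4)}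
    (hc : c = p1 n ∨ c = p2 n ∨ ∃ m : Fin n, c = ehat m) (d : Fin (n+4)) (x : Pt n) :
    Rcurv A (ehat i) (ehat j) c d x = 0 := by
  unfold Rcurv
  rcases hc with h | h | ⟨m, h⟩
  · subst h
    rw [pd_eq_zero_of_invariant _ _ (fun t y => Γchr_shift_P (Or.inl rfl) (ehat i) d (ehat j) y t),
      pd_zero_fun (fun y => Γchr_P_zero (Or.inl rfl) y),
      Finset.sum_eq_zero fun e _ => by
        rw [Γchr_P_zero (a := ehat i) (b := p1 n) (c := e) (Or.inl rfl),
          Γchr_P_zero (a := e) (b := p1 n) (c := ehat j) (Or.inl rfl)]; ring]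
    ring
  · subst h
    rw [pd_eq_zero_of_invariant _ _ (fun t y => Γchr_shift_P (Or.inr rfl) (ehat i) d (ehat j) y t),
      pd_zero_fun (fun y => Γchr_P_zero (Or.inr (Or.inl rfl)) y),
      Finset.sum_eq_zero fun e _ => by
        rw [Γchr_P_zero (a := ehat i) (b := p2 n) (c := e) (Or.inr (Or.inl rfl)),
          Γchr_P_zero (a := e) (b := p2 n) (c := ehat j) (Or.inr (Or.inl rfl))]; ring]
    ring
  · subst h
    rw [pd_eq_zero_of_invariant _ _ (fun t y => Γchr_E_E_shift_e hA i d j m y t),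
      pd_zero_fun (fun y => Γchr_EE_zero hA (ehat i) m j y),
      Finset.sum_eq_zero fun e _ => ?_]
    · ring
    rw [Γchr_EE_zero hA e m j]
    rcases index_cases e with h | h | ⟨w, h⟩ | h | h <;> subst h
    · rw [Γchr_P_zero (a := ehat i) (b := ehat m) (c := p1 n) (Or.inr (Or.inr (Or.inl rfl)))]
      ring
    · rw [Γchr_P_zero (a := ehat i) (b := ehat m) (c := p2 n) (Or.inr (Or.inr (Or.inr rfl)))]
      ring
    · rw [Γchr_EE_zero hA (ehat i) m w]; ring
    · rw [Γchr_Q_zero (Or.inl rfl) d (ehat j)]; ring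
    · rw [Γchr_Q_zero (Or.inr rfl) d (ehat j)]; ring

theorem Rcurv_EE_d_zero (hA : ∀ α, (A α)ᵀ = -A α) (i j : Fin n) {d : Fin (n+4)}
    (hd : d = p1 n ∨ d = p2 n ∨ ∃ m : Fin n, d = ehat m) (c : Fin (n+4)) (x : Pt n) :
    Rcurv A (ehat i) (ehat j) c d x = 0 := by
  unfold Rcurv
  rcases hd with h | h | ⟨m, h⟩
  · subst h
    rw [pd_eq_zero_of_invariant _ _ (fun t y => Γchr_shift_P (Or.inl rfl) (ehat i) c (ehat j) y t),
      pd_zero_fun (fun y => Γchr_P_zero (Or.inl rfl) y),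
      Finset.sum_eq_zero fun e _ => by
        rw [Γchr_P_zero (a := e) (b := p1 n) (c := ehat j) (Or.inl rfl),
          Γchr_P_zero (a := ehat i) (b := p1 n) (c := e) (Or.inl rfl)]; ring]
    ring
  · subst h
    rw [pd_eq_zero_of_invariant _ _ (fun t y => Γchr_shift_P (Or.inr rfl) (ehat i) c (ehat j) y t),
      pd_zero_fun (fun y => Γchr_P_zero (Or.inr (Or.inl rfl)) y),
      Finset.sum_eq_zero fun e _ => by
        rw [Γchr_P_zero (a := e) (b := p2 n) (c := ehat j) (Or.inr (Or.inl rfl)),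
          Γchr_P_zero (a := ehat i) (b := p2 n) (c := e) (Or.inr (Or.inl rfl))]; ring]
    ring
  · subst h
    rw [pd_eq_zero_of_invariant _ _ (fun t y => Γchr_E_E_shift_e hA i c j m y t),
      pd_zero_fun (fun y => Γchr_EE_zero hA (ehat i) m j y),
      Finset.sum_eq_zero fun e _ => ?_]
    · ring
    rw [Γchr_EE_zero hA e m j]
    rcases index_cases e with h | h | ⟨w, h⟩ | h | h <;> subst h
    · rw [Γchr_P_zero (a := ehat i) (b := ehat m) (c := p1 n) (Or.inr (Or.inr (Or.inl rfl)))]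
      ring
    · rw [Γchr_P_zero (a := ehat i) (b := ehat m) (c := p2 n) (Or.inr (Or.inr (Or.inr rfl)))]
      ring
    · rw [Γchr_EE_zero hA (ehat i) m w]; ring
    · rw [Γchr_Q_zero (Or.inl rfl) c (ehat j)]; ring
    · rw [Γchr_Q_zero (Or.inr rfl) c (ehat j)]; ring

theorem Rcurv_shift_P {b : Fin (n+4)} (hb : b = p1 n ∨ b = p2 n)
    (a b' c d : Fin (n+4)) (x : Pt n) (t : ℝ) :
    Rcurv A a b' c d (x + t • (Pi.single b 1 : Pt n)) = Rcurv A a b' c d x := by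
  unfold Rcurv
  rw [pd_invariant _ _ (fun y => Γchr_shift_P hb a d b' y t),
    pd_invariant _ _ (fun y => Γchr_shift_P hb a c b' y t)]
  congr 1
  refine Finset.sum_congr rfl fun e _ => ?_
  rw [Γchr_shift_P hb a c e, Γchr_shift_P hb e d b', Γchr_shift_P hb a d e,
    Γchr_shift_P hb e c b']

theorem Rcurv_EE_shift_e (hA : ∀ α, (A α)ᵀ = -A α) (i j k : Fin n) (c d : Fin (n+4))
    (x : Pt n) (t : ℝ) :
    Rcurv A (ehat i) (ehat j) c d (x + t • (Pi.single (ehat k) 1 : Pt n))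
      = Rcurv A (ehat i) (ehat j) c d x := by
  unfold Rcurv
  rw [pd_invariant _ _ (fun y => Γchr_E_E_shift_e hA i d j k y t),
    pd_invariant _ _ (fun y => Γchr_E_E_shift_e hA i c j k y t)]
  congr 1
  refine Finset.sum_congr rfl fun e _ => ?_
  rcases index_cases e with h | h | ⟨w, h⟩ | h | h <;> subst h
  · rw [Γchr_P_zero (a := ehat i) (b := c) (c := p1 n) (Or.inr (Or.inr (Or.inl rfl))),
      Γchr_P_zero (a := ehat i) (b := c) (c := p1 n) (Or.inr (Or.inr (Or.inl rfl))),
      Γchr_P_zero (a := ehat i) (b := d) (c := p1 n) (Or.inr (Or.inr (Or.inl rfl))),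
      Γchr_P_zero (a := ehat i) (b := d) (c := p1 n) (Or.inr (Or.inr (Or.inl rfl)))]
    ring
  · rw [Γchr_P_zero (a := ehat i) (b := c) (c := p2 n) (Or.inr (Or.inr (Or.inr rfl))),
      Γchr_P_zero (a := ehat i) (b := c) (c := p2 n) (Or.inr (Or.inr (Or.inr rfl))),
      Γchr_P_zero (a := ehat i) (b := d) (c := p2 n) (Or.inr (Or.inr (Or.inr rfl))),
      Γchr_P_zero (a := ehat i) (b := d) (c := p2 n) (Or.inr (Or.inr (Or.inr rfl)))]
    ring
  · rw [Γchr_E_E_shift_e hA i c w k, Γchr_E_E_shift_e hA w d j k,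
      Γchr_E_E_shift_e hA i d w k, Γchr_E_E_shift_e hA w c j k]
  · rw [Γchr_Q_zero (Or.inl rfl) d (ehat j), Γchr_Q_zero (Or.inl rfl) d (ehat j),
      Γchr_Q_zero (Or.inl rfl) c (ehat j), Γchr_Q_zero (Or.inl rfl) c (ehat j)]
    ring
  · rw [Γchr_Q_zero (Or.inr rfl) d (ehat j), Γchr_Q_zero (Or.inr rfl) d (ehat j),
      Γchr_Q_zero (Or.inr rfl) c (ehat j), Γchr_Q_zero (Or.inr rfl) c (ehat j)]
    ring
theorem nonQ_p1 : ¬(p1 n = q1 n ∨ p1 n = q2 n) :=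
  fun h => h.elim (fun h => p1_ne_q1 h) (fun h => p1_ne_q2 h)
theorem nonQ_p2 : ¬(p2 n = q1 n ∨ p2 n = q2 n) :=
  fun h => h.elim (fun h => p2_ne_q1 h) (fun h => p2_ne_q2 h)
theorem nonQ_ehat (w : Fin n) : ¬(ehat w = q1 n ∨ ehat w = q2 n) :=
  fun h => h.elim (fun h => ehat_ne_q1 w h) (fun h => ehat_ne_q2 w h)

theorem covRAux_nil (a b c d : Fin (n+4)) (x : Pt n) :
    covRAux A a b c d [] x = Rcurv A a b c d x := by rw [covRAux]

theorem covRAux_cons (a b c d f : Fin (n+4)) (fs : List (Fin (n+4))) (x : Pt n) :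
    covRAux A a b c d (f :: fs) x =
      pd f (covRAux A a b c d fs) x
      + ∑ l : Fin (n + 4), Γchr A a f l x * covRAux A l b c d fs x
      - ∑ l : Fin (n + 4), Γchr A l f b x * covRAux A a l c d fs x
      - ∑ l : Fin (n + 4), Γchr A l f c x * covRAux A a b l d fs x
      - ∑ l : Fin (n + 4), Γchr A l f d x * covRAux A a b c l fs x
      - ∑ s : Fin fs.length, ∑ l : Fin (n + 4),
          Γchr A l f (fs.get s) x * covRAux A a b c d (fs.set s l) x := by
  rw [covRAux]

theorem mem_set_self (fs : List (Fin (n+4))) (s : Fin fs.length) (l : Fin (n+4)) :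
    l ∈ fs.set s l := by
  have h1 : (s : ℕ) < (fs.set s l).length := by simp [s.isLt]
  have h2 : (fs.set s l)[(s:ℕ)] = l := List.getElem_set_self h1
  have h3 := List.getElem_mem h1
  rwa [h2] at h3

theorem master (hA : ∀ α, (A α)ᵀ = -A α) :
    ∀ (m : ℕ) (fs : List (Fin (n+4))), fs.length = m →
    (∀ a b c d (x : Pt n), (a = q1 n ∨ a = q2 n) → covRAux A a b c d fs x = 0)
  ∧ (∀ (i : Fin n) b c d (x : Pt n), (b = p1 n ∨ b = p2 n) →
      covRAux A (ehat i) b c d fs x = 0)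
  ∧ (∀ (i j : Fin n) c d (x : Pt n), (c = p1 n ∨ c = p2 n ∨ ∃ w, c = ehat w) →
      covRAux A (ehat i) (ehat j) c d fs x = 0)
  ∧ (∀ (i j : Fin n) c d (x : Pt n), (d = p1 n ∨ d = p2 n ∨ ∃ w, d = ehat w) →
      covRAux A (ehat i) (ehat j) c d fs x = 0)
  ∧ (∀ (i j : Fin n) c d (x : Pt n), (∃ g ∈ fs, ¬(g = q1 n ∨ g = q2 n)) →
      covRAux A (ehat i) (ehat j) c d fs x = 0)
  ∧ (∀ (i j k : Fin n) c d (t : ℝ) (x : Pt n),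
      covRAux A (ehat i) (ehat j) c d fs (x + t • (Pi.single (ehat k) 1 : Pt n))
        = covRAux A (ehat i) (ehat j) c d fs x)
  ∧ (∀ a b c d (p : Fin (n+4)), (p = p1 n ∨ p = p2 n) → ∀ (t : ℝ) (x : Pt n),
      covRAux A a b c d fs (x + t • (Pi.single p 1 : Pt n)) = covRAux A a b c d fs x) := by
  intro m
  induction m with
  | zero =>
    intro fs hlen
    have hfs : fs = [] := List.length_eq_zero_iff.mp hlen
    subst hfs
    refine ⟨?_, ?_, ?_, ?_, ?_, ?_, ?_⟩
    · intro a b c d x ha; rw [covRAux_nil]; exact Rcurv_Q_zero ha b c d x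
    · intro i b c d x hb; rw [covRAux_nil]; exact Rcurv_P_zero hb (ehat i) c d x
    · intro i j c d x hc; rw [covRAux_nil]; exact Rcurv_EE_c_zero hA i j hc d x
    · intro i j c d x hd; rw [covRAux_nil]; exact Rcurv_EE_d_zero hA i j hd c x
    · rintro i j c d x ⟨g, hg, _⟩; exact absurd hg List.not_mem_nil
    · intro i j k c d t x; rw [covRAux_nil, covRAux_nil]
      exact Rcurv_EE_shift_e hA i j k c d x t
    · intro a b c d p hp t x; rw [covRAux_nil, covRAux_nil]
      exact Rcurv_shift_P hp a b c d x t
  | succ m IH =>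
    intro fs0 hlen
    rcases fs0 with _ | ⟨f, fs⟩
    · simp at hlen
    have hlen' : fs.length = m := by simpa using hlen
    obtain ⟨ihQ, ihP, ih3, ih4, ih5, ih6, ih7⟩ := IH fs hlen'
    have ihset := fun (s : Fin fs.length) (l : Fin (n+4)) =>
      IH (fs.set s l) (by simp [List.length_set, hlen'])
    refine ⟨?_, ?_, ?_, ?_, ?_, ?_, ?_⟩
    · -- claim 1 : upper index in Q
      intro a b c d x ha
      rw [covRAux_cons]
      rw [pd_zero_fun (fun y => ihQ a b c d y ha),
        Finset.sum_eq_zero (fun l _ => by rw [Γchr_Q_zero ha f l]; ring),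
        Finset.sum_eq_zero (fun l _ => by rw [ihQ a l c d x ha]; ring),
        Finset.sum_eq_zero (fun l _ => by rw [ihQ a b l d x ha]; ring),
        Finset.sum_eq_zero (fun l _ => by rw [ihQ a b c l x ha]; ring),
        Finset.sum_eq_zero (fun s _ => Finset.sum_eq_zero (fun l _ => by
          rw [(ihset s l).1 a b c d x ha]; ring))]
      ring
    · -- claim 2 : b in P
      intro i b c d x hb
      rw [covRAux_cons]
      rw [pd_zero_fun (fun y => ihP i b c d y hb),
        Finset.sum_eq_zero (fun l _ => by
          rcases index_cases l with h|h|⟨w,h⟩|h|h <;> subst h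
          · rw [Γchr_P_zero (a := ehat i) (b := f) (c := p1 n)
              (Or.inr (Or.inr (Or.inl rfl)))]; ring
          · rw [Γchr_P_zero (a := ehat i) (b := f) (c := p2 n)
              (Or.inr (Or.inr (Or.inr rfl)))]; ring
          · rw [ihP w b c d x hb]; ring
          · rw [ihQ (q1 n) b c d x (Or.inl rfl)]; ring
          · rw [ihQ (q2 n) b c d x (Or.inr rfl)]; ring),
        Finset.sum_eq_zero (fun l _ => by
          rcases hb with h|h <;> subst h
          · rw [Γchr_P_zero (a := l) (b := f) (c := p1 n)
              (Or.inr (Or.inr (Or.inl rfl)))]; ring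
          · rw [Γchr_P_zero (a := l) (b := f) (c := p2 n)
              (Or.inr (Or.inr (Or.inr rfl)))]; ring),
        Finset.sum_eq_zero (fun l _ => by rw [ihP i b l d x hb]; ring),
        Finset.sum_eq_zero (fun l _ => by rw [ihP i b c l x hb]; ring),
        Finset.sum_eq_zero (fun s _ => Finset.sum_eq_zero (fun l _ => by
          rw [(ihset s l).2.1 i b c d x hb]; ring))]
      ring
    · -- claim 3 : c not in Q
      intro i j c d x hc
      rw [covRAux_cons]
      rw [pd_zero_fun (fun y => ih3 i j c d y hc),
        Finset.sum_eq_zero (fun l _ => by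
          rcases index_cases l with h|h|⟨w,h⟩|h|h <;> subst h
          · rw [Γchr_P_zero (a := ehat i) (b := f) (c := p1 n)
              (Or.inr (Or.inr (Or.inl rfl)))]; ring
          · rw [Γchr_P_zero (a := ehat i) (b := f) (c := p2 n)
              (Or.inr (Or.inr (Or.inr rfl)))]; ring
          · rw [ih3 w j c d x hc]; ring
          · rw [ihQ (q1 n) (ehat j) c d x (Or.inl rfl)]; ring
          · rw [ihQ (q2 n) (ehat j) c d x (Or.inr rfl)]; ring),
        Finset.sum_eq_zero (fun l _ => by
          rcases index_cases l with h|h|⟨w,h⟩|h|h <;> subst h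
          · rw [ihP i (p1 n) c d x (Or.inl rfl)]; ring
          · rw [ihP i (p2 n) c d x (Or.inr rfl)]; ring
          · rw [ih3 i w c d x hc]; ring
          · rw [Γchr_Q_zero (Or.inl rfl) f (ehat j)]; ring
          · rw [Γchr_Q_zero (Or.inr rfl) f (ehat j)]; ring),
        Finset.sum_eq_zero (fun l _ => by
          rcases index_cases l with h|h|⟨w,h⟩|h|h <;> subst h
          · rw [ih3 i j (p1 n) d x (Or.inl rfl)]; ring
          · rw [ih3 i j (p2 n) d x (Or.inr (Or.inl rfl))]; ring
          · rw [ih3 i j (ehat w) d x (Or.inr (Or.inr ⟨w, rfl⟩))]; ring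
          · rw [Γchr_Q_zero (Or.inl rfl) f c]; ring
          · rw [Γchr_Q_zero (Or.inr rfl) f c]; ring),
        Finset.sum_eq_zero (fun l _ => by rw [ih3 i j c l x hc]; ring),
        Finset.sum_eq_zero (fun s _ => Finset.sum_eq_zero (fun l _ => by
          rw [(ihset s l).2.2.1 i j c d x hc]; ring))]
      ring
    · -- claim 4 : d not in Q
      intro i j c d x hd
      rw [covRAux_cons]
      rw [pd_zero_fun (fun y => ih4 i j c d y hd),
        Finset.sum_eq_zero (fun l _ => by
          rcases index_cases l with h|h|⟨w,h⟩|h|h <;> subst h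
          · rw [Γchr_P_zero (a := ehat i) (b := f) (c := p1 n)
              (Or.inr (Or.inr (Or.inl rfl)))]; ring
          · rw [Γchr_P_zero (a := ehat i) (b := f) (c := p2 n)
              (Or.inr (Or.inr (Or.inr rfl)))]; ring
          · rw [ih4 w j c d x hd]; ring
          · rw [ihQ (q1 n) (ehat j) c d x (Or.inl rfl)]; ring
          · rw [ihQ (q2 n) (ehat j) c d x (Or.inr rfl)]; ring),
        Finset.sum_eq_zero (fun l _ => by
          rcases index_cases l with h|h|⟨w,h⟩|h|h <;> subst h
          · rw [ihP i (p1 n) c d x (Or.inl rfl)]; ring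
          · rw [ihP i (p2 n) c d x (Or.inr rfl)]; ring
          · rw [ih4 i w c d x hd]; ring
          · rw [Γchr_Q_zero (Or.inl rfl) f (ehat j)]; ring
          · rw [Γchr_Q_zero (Or.inr rfl) f (ehat j)]; ring),
        Finset.sum_eq_zero (fun l _ => by rw [ih4 i j l d x hd]; ring),
        Finset.sum_eq_zero (fun l _ => by
          rcases index_cases l with h|h|⟨w,h⟩|h|h <;> subst h
          · rw [ih4 i j c (p1 n) x (Or.inl rfl)]; ring
          · rw [ih4 i j c (p2 n) x (Or.inr (Or.inl rfl))]; ring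
          · rw [ih4 i j c (ehat w) x (Or.inr (Or.inr ⟨w, rfl⟩))]; ring
          · rw [Γchr_Q_zero (Or.inl rfl) f d]; ring
          · rw [Γchr_Q_zero (Or.inr rfl) f d]; ring),
        Finset.sum_eq_zero (fun s _ => Finset.sum_eq_zero (fun l _ => by
          rw [(ihset s l).2.2.2.1 i j c d x hd]; ring))]
      ring
    · -- claim 5 : some non-Q index in the list
      rintro i j c d x ⟨g, hg, hgQ⟩
      have hnf : (¬(f = q1 n ∨ f = q2 n)) ∨ (∃ g' ∈ fs, ¬(g' = q1 n ∨ g' = q2 n)) := by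
        rcases List.mem_cons.mp hg with h | h
        · left; rw [← h]; exact hgQ
        · right; exact ⟨g, h, hgQ⟩
      rw [covRAux_cons]
      have t1 : pd f (covRAux A (ehat i) (ehat j) c d fs) x = 0 := by
        by_cases hfs : ∃ g' ∈ fs, ¬(g' = q1 n ∨ g' = q2 n)
        · exact pd_zero_fun (fun y => ih5 i j c d y hfs) f x
        · have hf : ¬(f = q1 n ∨ f = q2 n) := by
            rcases hnf with h | h
            · exact h
            · exact absurd h hfs
          rcases index_cases f with h|h|⟨w,h⟩|h|h <;> subst h
          · exact pd_eq_zero_of_invariant _ _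
              (fun t y => ih7 (ehat i) (ehat j) c d (p1 n) (Or.inl rfl) t y) x
          · exact pd_eq_zero_of_invariant _ _
              (fun t y => ih7 (ehat i) (ehat j) c d (p2 n) (Or.inr rfl) t y) x
          · exact pd_eq_zero_of_invariant _ _ (fun t y => ih6 i j w c d t y) x
          · exact absurd (Or.inl rfl) hf
          · exact absurd (Or.inr rfl) hf
      have t2 : ∑ l : Fin (n+4), Γchr A (ehat i) f l x * covRAux A l (ehat j) c d fs x
          = 0 := by
        rcases index_cases f with h|h|⟨w,h⟩|h|h <;> subst h
        · exact Finset.sum_eq_zero fun l _ => by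
            rw [Γchr_P_zero (a := ehat i) (b := p1 n) (c := l) (Or.inl rfl)]; ring
        · exact Finset.sum_eq_zero fun l _ => by
            rw [Γchr_P_zero (a := ehat i) (b := p2 n) (c := l) (Or.inr (Or.inl rfl))]; ring
        · exact Finset.sum_eq_zero fun l _ => by
            rcases index_cases l with h|h|⟨w2,h⟩|h|h <;> subst h
            · rw [Γchr_P_zero (a := ehat i) (b := ehat w) (c := p1 n)
                (Or.inr (Or.inr (Or.inl rfl)))]; ring
            · rw [Γchr_P_zero (a := ehat i) (b := ehat w) (c := p2 n)
                (Or.inr (Or.inr (Or.inr rfl)))]; ring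
            · rw [Γchr_EE_zero hA (ehat i) w w2]; ring
            · rw [ihQ (q1 n) (ehat j) c d x (Or.inl rfl)]; ring
            · rw [ihQ (q2 n) (ehat j) c d x (Or.inr rfl)]; ring
        all_goals {
          have hfs' : ∃ g' ∈ fs, ¬(g' = q1 n ∨ g' = q2 n) := by
            rcases hnf with h | h
            · exact absurd (by simp) h
            · exact h
          exact Finset.sum_eq_zero fun l _ => by
            rcases index_cases l with h|h|⟨w2,h⟩|h|h <;> subst h
            · rw [Γchr_P_zero (a := ehat i) (c := p1 n)
                (Or.inr (Or.inr (Or.inl rfl)))]; ring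
            · rw [Γchr_P_zero (a := ehat i) (c := p2 n)
                (Or.inr (Or.inr (Or.inr rfl)))]; ring
            · rw [ih5 w2 j c d x hfs']; ring
            · rw [ihQ (q1 n) (ehat j) c d x (Or.inl rfl)]; ring
            · rw [ihQ (q2 n) (ehat j) c d x (Or.inr rfl)]; ring }
      have t3 : ∑ l : Fin (n+4), Γchr A l f (ehat j) x * covRAux A (ehat i) l c d fs x
          = 0 := by
        rcases index_cases f with h|h|⟨w,h⟩|h|h <;> subst h
        · exact Finset.sum_eq_zero fun l _ => by
            rw [Γchr_P_zero (a := l) (b := p1 n) (c := ehat j) (Or.inl rfl)]; ring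
        · exact Finset.sum_eq_zero fun l _ => by
            rw [Γchr_P_zero (a := l) (b := p2 n) (c := ehat j) (Or.inr (Or.inl rfl))]; ring
        · exact Finset.sum_eq_zero fun l _ => by
            rw [Γchr_EE_zero hA l w j]; ring
        all_goals {
          have hfs' : ∃ g' ∈ fs, ¬(g' = q1 n ∨ g' = q2 n) := by
            rcases hnf with h | h
            · exact absurd (by simp) h
            · exact h
          exact Finset.sum_eq_zero fun l _ => by
            rcases index_cases l with h|h|⟨w2,h⟩|h|h <;> subst h
            · rw [ihP i (p1 n) c d x (Or.inl rfl)]; ring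
            · rw [ihP i (p2 n) c d x (Or.inr rfl)]; ring
            · rw [ih5 i w2 c d x hfs']; ring
            · rw [Γchr_Q_zero (Or.inl rfl) _ (ehat j)]; ring
            · rw [Γchr_Q_zero (Or.inr rfl) _ (ehat j)]; ring }
      have t4 : ∑ l : Fin (n+4), Γchr A l f c x * covRAux A (ehat i) (ehat j) l d fs x
          = 0 := Finset.sum_eq_zero fun l _ => by
        rcases index_cases l with h|h|⟨w2,h⟩|h|h <;> subst h
        · rw [ih3 i j (p1 n) d x (Or.inl rfl)]; ring
        · rw [ih3 i j (p2 n) d x (Or.inr (Or.inl rfl))]; ring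
        · rw [ih3 i j (ehat w2) d x (Or.inr (Or.inr ⟨w2, rfl⟩))]; ring
        · rw [Γchr_Q_zero (Or.inl rfl) f c]; ring
        · rw [Γchr_Q_zero (Or.inr rfl) f c]; ring
      have t5 : ∑ l : Fin (n+4), Γchr A l f d x * covRAux A (ehat i) (ehat j) c l fs x
          = 0 := Finset.sum_eq_zero fun l _ => by
        rcases index_cases l with h|h|⟨w2,h⟩|h|h <;> subst h
        · rw [ih4 i j c (p1 n) x (Or.inl rfl)]; ring
        · rw [ih4 i j c (p2 n) x (Or.inr (Or.inl rfl))]; ring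
        · rw [ih4 i j c (ehat w2) x (Or.inr (Or.inr ⟨w2, rfl⟩))]; ring
        · rw [Γchr_Q_zero (Or.inl rfl) f d]; ring
        · rw [Γchr_Q_zero (Or.inr rfl) f d]; ring
      have t6 : ∑ s : Fin fs.length, ∑ l : Fin (n+4),
          Γchr A l f (fs.get s) x * covRAux A (ehat i) (ehat j) c d (fs.set s l) x
          = 0 := Finset.sum_eq_zero fun s _ => Finset.sum_eq_zero fun l _ => by
        rcases index_cases l with h|h|⟨w2,h⟩|h|h <;> subst h
        · rw [(ihset s (p1 n)).2.2.2.2.1 i j c d x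
            ⟨p1 n, mem_set_self fs s (p1 n), nonQ_p1⟩]; ring
        · rw [(ihset s (p2 n)).2.2.2.2.1 i j c d x
            ⟨p2 n, mem_set_self fs s (p2 n), nonQ_p2⟩]; ring
        · rw [(ihset s (ehat w2)).2.2.2.2.1 i j c d x
            ⟨ehat w2, mem_set_self fs s (ehat w2), nonQ_ehat w2⟩]; ring
        · rw [Γchr_Q_zero (Or.inl rfl) f (fs.get s)]; ring
        · rw [Γchr_Q_zero (Or.inr rfl) f (fs.get s)]; ring
      rw [t1, t2, t3, t4, t5, t6]
      ring
    · -- claim 6 : invariance in the ehat directions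
      intro i j k c d t x
      rw [covRAux_cons, covRAux_cons]
      have T1 : pd f (covRAux A (ehat i) (ehat j) c d fs)
          (x + t • (Pi.single (ehat k) 1 : Pt n))
          = pd f (covRAux A (ehat i) (ehat j) c d fs) x :=
        pd_invariant _ _ (fun y => ih6 i j k c d t y) f x
      have T2 : ∑ l : Fin (n+4), Γchr A (ehat i) f l (x + t • (Pi.single (ehat k) 1 : Pt n))
            * covRAux A l (ehat j) c d fs (x + t • (Pi.single (ehat k) 1 : Pt n))
          = ∑ l : Fin (n+4), Γchr A (ehat i) f l x * covRAux A l (ehat j) c d fs x :=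
        Finset.sum_congr rfl fun l _ => by
          rcases index_cases l with h|h|⟨w,h⟩|h|h <;> subst h
          · rw [Γchr_P_zero (a := ehat i) (b := f) (c := p1 n)
              (Or.inr (Or.inr (Or.inl rfl))) (x + t • (Pi.single (ehat k) 1 : Pt n)),
              Γchr_P_zero (a := ehat i) (b := f) (c := p1 n)
              (Or.inr (Or.inr (Or.inl rfl))) x]; ring
          · rw [Γchr_P_zero (a := ehat i) (b := f) (c := p2 n)
              (Or.inr (Or.inr (Or.inr rfl))) (x + t • (Pi.single (ehat k) 1 : Pt n)),
              Γchr_P_zero (a := ehat i) (b := f) (c := p2 n)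
              (Or.inr (Or.inr (Or.inr rfl))) x]; ring
          · rw [Γchr_E_E_shift_e hA i f w k x t, ih6 w j k c d t x]
          · rw [ihQ (q1 n) (ehat j) c d (x + t • (Pi.single (ehat k) 1 : Pt n)) (Or.inl rfl),
              ihQ (q1 n) (ehat j) c d x (Or.inl rfl)]; ring
          · rw [ihQ (q2 n) (ehat j) c d (x + t • (Pi.single (ehat k) 1 : Pt n)) (Or.inr rfl),
              ihQ (q2 n) (ehat j) c d x (Or.inr rfl)]; ring
      have T3 : ∑ l : Fin (n+4), Γchr A l f (ehat j) (x + t • (Pi.single (ehat k) 1 : Pt n))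
            * covRAux A (ehat i) l c d fs (x + t • (Pi.single (ehat k) 1 : Pt n))
          = ∑ l : Fin (n+4), Γchr A l f (ehat j) x * covRAux A (ehat i) l c d fs x :=
        Finset.sum_congr rfl fun l _ => by
          rcases index_cases l with h|h|⟨w,h⟩|h|h <;> subst h
          · rw [ihP i (p1 n) c d (x + t • (Pi.single (ehat k) 1 : Pt n)) (Or.inl rfl),
              ihP i (p1 n) c d x (Or.inl rfl)]; ring
          · rw [ihP i (p2 n) c d (x + t • (Pi.single (ehat k) 1 : Pt n)) (Or.inr rfl),
              ihP i (p2 n) c d x (Or.inr rfl)]; ring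
          · rw [Γchr_E_E_shift_e hA w f j k x t, ih6 i w k c d t x]
          · rw [Γchr_Q_zero (Or.inl rfl) f (ehat j)
                (x + t • (Pi.single (ehat k) 1 : Pt n)),
              Γchr_Q_zero (Or.inl rfl) f (ehat j) x]; ring
          · rw [Γchr_Q_zero (Or.inr rfl) f (ehat j)
                (x + t • (Pi.single (ehat k) 1 : Pt n)),
              Γchr_Q_zero (Or.inr rfl) f (ehat j) x]; ring
      have T4 : ∑ l : Fin (n+4), Γchr A l f c (x + t • (Pi.single (ehat k) 1 : Pt n))
            * covRAux A (ehat i) (ehat j) l d fs (x + t • (Pi.single (ehat k) 1 : Pt n))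
          = ∑ l : Fin (n+4), Γchr A l f c x * covRAux A (ehat i) (ehat j) l d fs x :=
        Finset.sum_congr rfl fun l _ => by
          rcases index_cases l with h|h|⟨w,h⟩|h|h <;> subst h
          · rw [ih3 i j (p1 n) d (x + t • (Pi.single (ehat k) 1 : Pt n)) (Or.inl rfl),
              ih3 i j (p1 n) d x (Or.inl rfl)]; ring
          · rw [ih3 i j (p2 n) d (x + t • (Pi.single (ehat k) 1 : Pt n))
                (Or.inr (Or.inl rfl)),
              ih3 i j (p2 n) d x (Or.inr (Or.inl rfl))]; ring
          · rw [ih3 i j (ehat w) d (x + t • (Pi.single (ehat k) 1 : Pt n))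
                (Or.inr (Or.inr ⟨w, rfl⟩)),
              ih3 i j (ehat w) d x (Or.inr (Or.inr ⟨w, rfl⟩))]; ring
          · rw [Γchr_Q_zero (Or.inl rfl) f c (x + t • (Pi.single (ehat k) 1 : Pt n)),
              Γchr_Q_zero (Or.inl rfl) f c x]; ring
          · rw [Γchr_Q_zero (Or.inr rfl) f c (x + t • (Pi.single (ehat k) 1 : Pt n)),
              Γchr_Q_zero (Or.inr rfl) f c x]; ring
      have T5 : ∑ l : Fin (n+4), Γchr A l f d (x + t • (Pi.single (ehat k) 1 : Pt n))
            * covRAux A (ehat i) (ehat j) c l fs (x + t • (Pi.single (ehat k) 1 : Pt n))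
          = ∑ l : Fin (n+4), Γchr A l f d x * covRAux A (ehat i) (ehat j) c l fs x :=
        Finset.sum_congr rfl fun l _ => by
          rcases index_cases l with h|h|⟨w,h⟩|h|h <;> subst h
          · rw [ih4 i j c (p1 n) (x + t • (Pi.single (ehat k) 1 : Pt n)) (Or.inl rfl),
              ih4 i j c (p1 n) x (Or.inl rfl)]; ring
          · rw [ih4 i j c (p2 n) (x + t • (Pi.single (ehat k) 1 : Pt n))
                (Or.inr (Or.inl rfl)),
              ih4 i j c (p2 n) x (Or.inr (Or.inl rfl))]; ring
          · rw [ih4 i j c (ehat w) (x + t • (Pi.single (ehat k) 1 : Pt n))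
                (Or.inr (Or.inr ⟨w, rfl⟩)),
              ih4 i j c (ehat w) x (Or.inr (Or.inr ⟨w, rfl⟩))]; ring
          · rw [Γchr_Q_zero (Or.inl rfl) f d (x + t • (Pi.single (ehat k) 1 : Pt n)),
              Γchr_Q_zero (Or.inl rfl) f d x]; ring
          · rw [Γchr_Q_zero (Or.inr rfl) f d (x + t • (Pi.single (ehat k) 1 : Pt n)),
              Γchr_Q_zero (Or.inr rfl) f d x]; ring
      have T6 : ∑ s : Fin fs.length, ∑ l : Fin (n+4),
            Γchr A l f (fs.get s) (x + t • (Pi.single (ehat k) 1 : Pt n))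
            * covRAux A (ehat i) (ehat j) c d (fs.set s l)
                (x + t • (Pi.single (ehat k) 1 : Pt n))
          = ∑ s : Fin fs.length, ∑ l : Fin (n+4),
            Γchr A l f (fs.get s) x * covRAux A (ehat i) (ehat j) c d (fs.set s l) x :=
        Finset.sum_congr rfl fun s _ => Finset.sum_congr rfl fun l _ => by
          rcases index_cases l with h|h|⟨w,h⟩|h|h <;> subst h
          · rw [(ihset s (p1 n)).2.2.2.2.1 i j c d
                (x + t • (Pi.single (ehat k) 1 : Pt n))
                ⟨p1 n, mem_set_self fs s (p1 n), nonQ_p1⟩,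
              (ihset s (p1 n)).2.2.2.2.1 i j c d x
                ⟨p1 n, mem_set_self fs s (p1 n), nonQ_p1⟩]; ring
          · rw [(ihset s (p2 n)).2.2.2.2.1 i j c d
                (x + t • (Pi.single (ehat k) 1 : Pt n))
                ⟨p2 n, mem_set_self fs s (p2 n), nonQ_p2⟩,
              (ihset s (p2 n)).2.2.2.2.1 i j c d x
                ⟨p2 n, mem_set_self fs s (p2 n), nonQ_p2⟩]; ring
          · rw [(ihset s (ehat w)).2.2.2.2.1 i j c d
                (x + t • (Pi.single (ehat k) 1 : Pt n))
                ⟨ehat w, mem_set_self fs s (ehat w), nonQ_ehat w⟩,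
              (ihset s (ehat w)).2.2.2.2.1 i j c d x
                ⟨ehat w, mem_set_self fs s (ehat w), nonQ_ehat w⟩]; ring
          · rw [Γchr_Q_zero (Or.inl rfl) f (fs.get s)
                (x + t • (Pi.single (ehat k) 1 : Pt n)),
              Γchr_Q_zero (Or.inl rfl) f (fs.get s) x]; ring
          · rw [Γchr_Q_zero (Or.inr rfl) f (fs.get s)
                (x + t • (Pi.single (ehat k) 1 : Pt n)),
              Γchr_Q_zero (Or.inr rfl) f (fs.get s) x]; ring
      rw [T1, T2, T3, T4, T5, T6]
    · -- claim 7 : invariance in the p directions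
      intro a b c d p hp t x
      rw [covRAux_cons, covRAux_cons]
      have T1 : pd f (covRAux A a b c d fs) (x + t • (Pi.single p 1 : Pt n))
          = pd f (covRAux A a b c d fs) x :=
        pd_invariant _ _ (fun y => ih7 a b c d p hp t y) f x
      have T2 :
        ∑ l : Fin (n+4), Γchr A a f l (x + t • (Pi.single p 1 : Pt n))
            * covRAux A l b c d fs (x + t • (Pi.single p 1 : Pt n))
          = ∑ l : Fin (n+4), Γchr A a f l x * covRAux A l b c d fs x :=
        Finset.sum_congr rfl fun l _ => by
          rw [Γchr_shift_P hp a f l x t, ih7 l b c d p hp t x]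
      have T3 :
        ∑ l : Fin (n+4), Γchr A l f b (x + t • (Pi.single p 1 : Pt n))
            * covRAux A a l c d fs (x + t • (Pi.single p 1 : Pt n))
          = ∑ l : Fin (n+4), Γchr A l f b x * covRAux A a l c d fs x :=
        Finset.sum_congr rfl fun l _ => by
          rw [Γchr_shift_P hp l f b x t, ih7 a l c d p hp t x]
      have T4 :
        ∑ l : Fin (n+4), Γchr A l f c (x + t • (Pi.single p 1 : Pt n))
            * covRAux A a b l d fs (x + t • (Pi.single p 1 : Pt n))
          = ∑ l : Fin (n+4), Γchr A l f c x * covRAux A a b l d fs x :=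
        Finset.sum_congr rfl fun l _ => by
          rw [Γchr_shift_P hp l f c x t, ih7 a b l d p hp t x]
      have T5 :
        ∑ l : Fin (n+4), Γchr A l f d (x + t • (Pi.single p 1 : Pt n))
            * covRAux A a b c l fs (x + t • (Pi.single p 1 : Pt n))
          = ∑ l : Fin (n+4), Γchr A l f d x * covRAux A a b c l fs x :=
        Finset.sum_congr rfl fun l _ => by
          rw [Γchr_shift_P hp l f d x t, ih7 a b c l p hp t x]
      have T6 :
        ∑ s : Fin fs.length, ∑ l : Fin (n+4),
            Γchr A l f (fs.get s) (x + t • (Pi.single p 1 : Pt n))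
            * covRAux A a b c d (fs.set s l) (x + t • (Pi.single p 1 : Pt n))
          = ∑ s : Fin fs.length, ∑ l : Fin (n+4),
            Γchr A l f (fs.get s) x * covRAux A a b c d (fs.set s l) x :=
        Finset.sum_congr rfl fun s _ => Finset.sum_congr rfl fun l _ => by
          rw [Γchr_shift_P hp l f (fs.get s) x t,
            (ihset s l).2.2.2.2.2.2 a b c d p hp t x]
      rw [T1, T2, T3, T4, T5, T6]

/-- The functions `R^î_{ĵ,b,c;f_1;…;f_r}` do not depend on the coordinates `x^3,…,x^{n+2}`. -/
theorem statement12 (n N : ℕ) (hn : 1 ≤ n) (hN : 1 ≤ N)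
    (A : Fin N → Matrix (Fin n) (Fin n) ℝ) (hA : ∀ α, (A α)ᵀ = -A α) :
    ∀ (fs : List (Fin (n + 4))) (b c : Fin (n + 4)) (k : Fin n) (i j : Fin n) (x : Pt n),
      pd (ehat k) (covR A (ehat i) (ehat j) b c fs) x = 0 := by
  intro fs b c k i j x
  refine pd_eq_zero_of_invariant _ _ (fun t y => ?_) x
  show covRAux A (ehat i) (ehat j) b c fs.reverse (y + t • (Pi.single (ehat k) 1 : Pt n))
    = covRAux A (ehat i) (ehat j) b c fs.reverse y
  exact (master hA fs.reverse.length fs.reverse rfl).2.2.2.2.2.1 i j k b c t y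

end
end HolPaper
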